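/- Let n ≥ 1, let A be an n×n nonnegative real matrix with positive max-times spectral radius λ = λ(A), let C be an n×n nonnegative real matrix with max_{1≤k≤n} max_i (C^{⊗k})_{ii} ≤ 1, and let θ = max( λ, max_{1≤k≤n−1} max_{(i_1,…,i_k) ∈ ℕ^k, 1 ≤ i_1+⋯+i_k ≤ n−k} ( max_i (A ⊗ C^{⊗i_1} ⊗ ⋯ ⊗ A ⊗ C^{⊗i_k})_{ii} )^{1/k} ). A positive vector x ∈ ℝ_{>0}^n satisfies both max_j C_{ij} x_j ≤ x_i for all i and max_{i,j} A_{ij} x_j / x_i = θ (i.e., x is a minimizer of the constrained problem) if and only if there exists a positive vector u ∈ ℝ_{>0}^n such that x = D^* ⊗ u, where D is the matrix with entries D_{ij} = max(θ^{-1} A_{ij}, C_{ij}). -/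

import Mathlib

open scoped BigOperators

noncomputable section

/-- The max-times spectral radius (maximum geometric cycle mean) of a
nonnegative `n × n` real matrix. -/
def mtSpecRad {n : ℕ} (A : Matrix (Fin n) (Fin n) ℝ) : ℝ :=
  sSup { r : ℝ | ∃ (k : ℕ) (hk : 0 < k), k ≤ n ∧ ∃ f : Fin k → Fin n,
    r = (∏ t : Fin k, A (f t) (f ⟨((t : ℕ) + 1) % k, Nat.mod_lt _ hk⟩)) ^ ((k : ℝ)⁻¹) }

/-- The maximum cycle mean of a real `n × n` matrix (max-plus spectral radius). -/
def mpCycleMean {n : ℕ} (A : Matrix (Fin n) (Fin n) ℝ) : ℝ :=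
  sSup { r : ℝ | ∃ (k : ℕ) (hk : 0 < k), k ≤ n ∧ ∃ f : Fin k → Fin n,
    r = (∑ t : Fin k, A (f t) (f ⟨((t : ℕ) + 1) % k, Nat.mod_lt _ hk⟩)) / (k : ℝ) }

/-- Max-times matrix product. -/
def mtMul {n : ℕ} (A B : Matrix (Fin n) (Fin n) ℝ) : Matrix (Fin n) (Fin n) ℝ :=
  Matrix.of fun i j => ⨆ k : Fin n, A i k * B k j

/-- Max-times matrix powers, with `A^{⊗0} = I`. -/
def mtPow {n : ℕ} (A : Matrix (Fin n) (Fin n) ℝ) : ℕ → Matrix (Fin n) (Fin n) ℝ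
  | 0 => Matrix.of fun i j => if i = j then 1 else 0
  | (k + 1) => mtMul (mtPow A k) A

/-- Max-times Kleene star: entrywise maximum of `I, S, S^{⊗2}, …, S^{⊗(n-1)}`. -/
def mtStar {n : ℕ} (S : Matrix (Fin n) (Fin n) ℝ) : Matrix (Fin n) (Fin n) ℝ :=
  Matrix.of fun i j => ⨆ k : Fin n, mtPow S (k : ℕ) i j

/-- Max-times matrix-vector product. -/
def mtVecMul {n : ℕ} (S : Matrix (Fin n) (Fin n) ℝ) (u : Fin n → ℝ) : Fin n → ℝ :=
  fun i => ⨆ j, S i j * u j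

/-- Max-plus matrix product. -/
def mpMul {n : ℕ} (A B : Matrix (Fin n) (Fin n) ℝ) : Matrix (Fin n) (Fin n) ℝ :=
  Matrix.of fun i j => ⨆ k : Fin n, (A i k + B k j)

/-- `mpPow A k` is the max-plus power `A^{⊗(k+1)}`. -/
def mpPow {n : ℕ} (A : Matrix (Fin n) (Fin n) ℝ) : ℕ → Matrix (Fin n) (Fin n) ℝ
  | 0 => A
  | (k + 1) => mpMul (mpPow A k) A

/-- Max-plus Kleene star: `S^*_{ii} = max(0, max_{1≤k≤n-1} (S^{⊗k})_{ii})` and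
`S^*_{ij} = max_{1≤k≤n-1} (S^{⊗k})_{ij}` for `i ≠ j`. -/
def mpStar {n : ℕ} (S : Matrix (Fin n) (Fin n) ℝ) : Matrix (Fin n) (Fin n) ℝ :=
  Matrix.of fun i j =>
    if i = j then max 0 (⨆ k : Fin (n - 1), mpPow S (k : ℕ) i j)
    else ⨆ k : Fin (n - 1), mpPow S (k : ℕ) i j

/-- Max-plus matrix-vector product. -/
def mpVecMul {n : ℕ} (S : Matrix (Fin n) (Fin n) ℝ) (x : Fin n → ℝ) : Fin n → ℝ :=
  fun i => ⨆ j, (S i j + x j)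

/-- Chebyshev-like (max-times) distance between a nonnegative matrix `A` and the
rank-one reciprocal matrix with entries `x i / x j`. -/
def mtRho {n : ℕ} (A : Matrix (Fin n) (Fin n) ℝ) (x : Fin n → ℝ) : ℝ :=
  max (⨆ p : Fin n × Fin n, A p.1 p.2 * x p.2 / x p.1)
    (sSup { r : ℝ | ∃ i j, 0 < A i j ∧ r = x i / (A i j * x j) })

/-- The alternating max-times product `A ⊗ C^{⊗ i₁} ⊗ A ⊗ C^{⊗ i₂} ⊗ ⋯ ⊗ A ⊗ C^{⊗ i_k}`. -/
def mtChain {n : ℕ} (A C : Matrix (Fin n) (Fin n) ℝ) :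
    (k : ℕ) → (Fin k → ℕ) → Matrix (Fin n) (Fin n) ℝ
  | 0, _ => Matrix.of fun i j => if i = j then 1 else 0
  | (k + 1), f => mtMul (mtMul A (mtPow C (f 0))) (mtChain A C k (fun t => f t.succ))

/-- The optimal value `θ` of the constrained max-times approximation problem. -/
def mtTheta {n : ℕ} (A C : Matrix (Fin n) (Fin n) ℝ) : ℝ :=
  max (mtSpecRad A)
    (sSup { r : ℝ | ∃ k : ℕ, 0 < k ∧ k ≤ n - 1 ∧ ∃ f : Fin k → ℕ,
      1 ≤ ∑ t, f t ∧ (∑ t, f t) ≤ n - k ∧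
      r = (⨆ i, mtChain A C k f i i) ^ ((k : ℝ)⁻¹) })

/-
Put `D = θ⁻¹ A ⊕ C`. For positive `x` the two minimizer conditions say exactly `D ⊗ x ≤ x`, and
then `x = D^* ⊗ x` because `D^{⊗m} ⊗ x ≤ x` for all `m` and `D^* ≥ I`; so every minimizer has the
required form.

Conversely, `D ⊗ (D^* ⊗ u) ≤ D^* ⊗ u` follows from `D^{⊗m} ≤ D^*` for all `m`, which holds
as soon as every cycle of `D` has weight at most `1`: a path of length `≥ n` repeats a vertex,
and cutting out the cycle between the repetitions does not decrease its weight. A cycle of `D`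
either uses only `C`-edges (weight `≤ 1` by the trace condition), or, rotated to start with an
`A`-edge, is dominated by `θ^{-k}` times a diagonal entry of `A^{⊗k}` or of an alternating
product `A ⊗ C^{⊗ i₁} ⊗ ⋯ ⊗ A ⊗ C^{⊗ i_k}`, which is at most `θ^k` by the definition of `θ`.
Hence `D ⊗ x ≤ x`, i.e. `C ⊗ x ≤ x` and `max A_{ij} x_j / x_i ≤ θ`. Equality holds since, for
any positive `x` with `C ⊗ x ≤ x` and `A_{ij} x_j ≤ s x_i`, every cycle of `A` of length `k` and
every alternating product with `k` factors `A` is bounded by `s^k`, so `θ ≤ s`.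
-/

open Finset

variable {n : ℕ}

section MaxTimes

variable {A B D : Matrix (Fin n) (Fin n) ℝ}

lemma le_mtMul (A B : Matrix (Fin n) (Fin n) ℝ) (i l j : Fin n) :
    A i l * B l j ≤ mtMul A B i j :=
  Finite.le_ciSup (fun l => A i l * B l j) l

lemma mtMul_le {i j : Fin n} {a : ℝ} (h : ∀ l, A i l * B l j ≤ a) : mtMul A B i j ≤ a :=
  have : Nonempty (Fin n) := ⟨i⟩
  ciSup_le h

lemma mtMul_nonneg (hA : ∀ i j, 0 ≤ A i j) (hB : ∀ i j, 0 ≤ B i j) (i j : Fin n) :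
    0 ≤ mtMul A B i j :=
  (mul_nonneg (hA i i) (hB i j)).trans (le_mtMul A B i i j)

lemma mtMul_mul_le (hA : ∀ i j, 0 ≤ A i j) {x : Fin n → ℝ} (hx : ∀ i, 0 ≤ x i) {α β : ℝ}
    (hβ : 0 ≤ β) (hAx : ∀ i j, A i j * x j ≤ α * x i) (hBx : ∀ i j, B i j * x j ≤ β * x i)
    (i j : Fin n) : mtMul A B i j * x j ≤ α * β * x i := by
  have : Nonempty (Fin n) := ⟨i⟩
  rw [mtMul, Matrix.of_apply, Real.iSup_mul_of_nonneg (hx j)]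
  refine ciSup_le fun l => ?_
  calc A i l * B l j * x j = A i l * (B l j * x j) := mul_assoc _ _ _
    _ ≤ A i l * (β * x l) := mul_le_mul_of_nonneg_left (hBx l j) (hA i l)
    _ = β * (A i l * x l) := by ring
    _ ≤ β * (α * x i) := mul_le_mul_of_nonneg_left (hAx i l) hβ
    _ = α * β * x i := by ring

lemma smul_mtMul {c : ℝ} (hc : 0 ≤ c) (A B : Matrix (Fin n) (Fin n) ℝ) :
    mtMul (c • A) B = c • mtMul A B := by
  ext i j
  simp only [mtMul, Matrix.of_apply, Matrix.smul_apply, smul_eq_mul, Real.mul_iSup_of_nonneg hc,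
    mul_assoc]

lemma mtMul_smul {c : ℝ} (hc : 0 ≤ c) (A B : Matrix (Fin n) (Fin n) ℝ) :
    mtMul A (c • B) = c • mtMul A B := by
  ext i j
  simp only [mtMul, Matrix.of_apply, Matrix.smul_apply, smul_eq_mul, Real.mul_iSup_of_nonneg hc,
    mul_left_comm]

lemma mtPow_zero_apply (D : Matrix (Fin n) (Fin n) ℝ) (i j : Fin n) :
    mtPow D 0 i j = if i = j then 1 else 0 := rfl

lemma mtPow_succ (D : Matrix (Fin n) (Fin n) ℝ) (k : ℕ) :
    mtPow D (k + 1) = mtMul (mtPow D k) D := rfl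

lemma mtPow_nonneg (hD : ∀ i j, 0 ≤ D i j) (k : ℕ) (i j : Fin n) : 0 ≤ mtPow D k i j := by
  induction k generalizing j with
  | zero => rw [mtPow_zero_apply]; split_ifs <;> norm_num
  | succ k ih => exact mtMul_nonneg (fun _ => ih) hD i j

lemma mtPow_one_apply (hD : ∀ i j, 0 ≤ D i j) (i j : Fin n) : mtPow D 1 i j = D i j := by
  refine le_antisymm (mtMul_le fun l => ?_) ?_
  · rw [mtPow_zero_apply]
    split_ifs with h
    · rw [h, one_mul]
    · rw [zero_mul]; exact hD i j
  · have h := le_mtMul (mtPow D 0) D i i j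
    rwa [mtPow_zero_apply, if_pos rfl, one_mul] at h

lemma mtPow_mul_mtPow_le (hD : ∀ i j, 0 ≤ D i j) (a b : ℕ) (i l j : Fin n) :
    mtPow D a i l * mtPow D b l j ≤ mtPow D (a + b) i j := by
  induction b generalizing j with
  | zero =>
    rw [mtPow_zero_apply]
    split_ifs with h
    · rw [h, mul_one, add_zero]
    · rw [mul_zero, add_zero]; exact mtPow_nonneg hD a i j
  | succ b ih =>
    rw [mtPow_succ, mtMul, Matrix.of_apply, Real.mul_iSup_of_nonneg (mtPow_nonneg hD a i l)]
    have : Nonempty (Fin n) := ⟨i⟩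
    refine ciSup_le fun m => ?_
    rw [← mul_assoc]
    exact (mul_le_mul_of_nonneg_right (ih m) (hD m j)).trans (le_mtMul _ _ i m j)

lemma mtPow_mul_le (hD : ∀ i j, 0 ≤ D i j) {x : Fin n → ℝ} (hx : ∀ i, 0 ≤ x i) {s : ℝ}
    (hs : 0 ≤ s) (hDx : ∀ i j, D i j * x j ≤ s * x i) (m : ℕ) (i j : Fin n) :
    mtPow D m i j * x j ≤ s ^ m * x i := by
  induction m generalizing i j with
  | zero =>
    rw [mtPow_zero_apply, pow_zero, one_mul]
    split_ifs with h
    · rw [h, one_mul]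
    · rw [zero_mul]; exact hx i
  | succ m ih =>
    rw [pow_succ]
    exact mtMul_mul_le (mtPow_nonneg hD m) hx hs ih hDx i j

lemma mtPow_smul {c : ℝ} (hc : 0 ≤ c) (D : Matrix (Fin n) (Fin n) ℝ) (m : ℕ) :
    mtPow (c • D) m = c ^ m • mtPow D m := by
  induction m with
  | zero => rw [pow_zero, one_smul]; rfl
  | succ m ih =>
    rw [mtPow_succ, mtPow_succ, ih, smul_mtMul (pow_nonneg hc m), mtMul_smul hc, smul_smul,
      pow_succ]

lemma mtStar_apply (D : Matrix (Fin n) (Fin n) ℝ) (i j : Fin n) :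
    mtStar D i j = ⨆ m : Fin n, mtPow D m i j := rfl

lemma mtPow_le_mtStar (D : Matrix (Fin n) (Fin n) ℝ) {m : ℕ} (hm : m < n) (i j : Fin n) :
    mtPow D m i j ≤ mtStar D i j :=
  Finite.le_ciSup (fun m : Fin n => mtPow D m i j) ⟨m, hm⟩

lemma one_le_mtStar_self (D : Matrix (Fin n) (Fin n) ℝ) (i : Fin n) : 1 ≤ mtStar D i i := by
  simpa [mtPow_zero_apply] using mtPow_le_mtStar D i.pos i i

lemma mtVecMul_mtStar_eq_self (hD : ∀ i j, 0 ≤ D i j) {x : Fin n → ℝ} (hx : ∀ i, 0 ≤ x i)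
    (hDx : ∀ i j, D i j * x j ≤ x i) : mtVecMul (mtStar D) x = x := by
  funext i
  have : Nonempty (Fin n) := ⟨i⟩
  refine le_antisymm (ciSup_le fun j => ?_) ?_
  · rw [mtStar_apply, Real.iSup_mul_of_nonneg (hx j)]
    refine ciSup_le fun m => ?_
    simpa using mtPow_mul_le hD hx zero_le_one (by simpa using hDx) m i j
  · calc x i ≤ mtStar D i i * x i := le_mul_of_one_le_left (hx i) (one_le_mtStar_self D i)
      _ ≤ mtVecMul (mtStar D) x i := Finite.le_ciSup (fun j => mtStar D i j * x j) i

lemma mul_mtVecMul_mtStar_le (hD : ∀ i j, 0 ≤ D i j) {u : Fin n → ℝ} (hu : ∀ i, 0 ≤ u i)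
    (hstar : ∀ m i j, mtPow D m i j ≤ mtStar D i j) (i j : Fin n) :
    D i j * mtVecMul (mtStar D) u j ≤ mtVecMul (mtStar D) u i := by
  have : Nonempty (Fin n) := ⟨i⟩
  rw [mtVecMul, Real.mul_iSup_of_nonneg (hD i j)]
  refine ciSup_le fun l => ?_
  rw [mtStar_apply, Real.iSup_mul_of_nonneg (hu l), Real.mul_iSup_of_nonneg (hD i j)]
  refine ciSup_le fun m => ?_
  calc D i j * (mtPow D m j l * u l) = mtPow D 1 i j * mtPow D m j l * u l := by
        rw [mtPow_one_apply hD, mul_assoc]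
    _ ≤ mtStar D i l * u l := mul_le_mul_of_nonneg_right
        ((mtPow_mul_mtPow_le hD 1 m i j l).trans (hstar _ i l)) (hu l)
    _ ≤ mtVecMul (mtStar D) u i := Finite.le_ciSup (fun l => mtStar D i l * u l) l

end MaxTimes

section Paths

variable {D : Matrix (Fin n) (Fin n) ℝ}

def pathWeight (D : Matrix (Fin n) (Fin n) ℝ) (p : ℕ → Fin n) (k : ℕ) : ℝ :=
  ∏ t ∈ range k, D (p t) (p (t + 1))

lemma pathWeight_nonneg (hD : ∀ i j, 0 ≤ D i j) (p : ℕ → Fin n) (k : ℕ) :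
    0 ≤ pathWeight D p k :=
  prod_nonneg fun _ _ => hD _ _

lemma pathWeight_zero (D : Matrix (Fin n) (Fin n) ℝ) (p : ℕ → Fin n) : pathWeight D p 0 = 1 :=
  prod_range_zero _

lemma pathWeight_succ (D : Matrix (Fin n) (Fin n) ℝ) (p : ℕ → Fin n) (k : ℕ) :
    pathWeight D p (k + 1) = pathWeight D p k * D (p k) (p (k + 1)) :=
  prod_range_succ _ _

lemma pathWeight_succ' (D : Matrix (Fin n) (Fin n) ℝ) (p : ℕ → Fin n) (k : ℕ) :
    pathWeight D p (k + 1) = D (p 0) (p 1) * pathWeight D (fun t => p (t + 1)) k := by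
  rw [pathWeight, prod_range_succ', mul_comm]; rfl

lemma pathWeight_add (D : Matrix (Fin n) (Fin n) ℝ) (p : ℕ → Fin n) (a b : ℕ) :
    pathWeight D p (a + b) = pathWeight D p a * pathWeight D (fun t => p (a + t)) b := by
  simp only [pathWeight, prod_range_add, add_assoc]

lemma pathWeight_le_mtPow (hD : ∀ i j, 0 ≤ D i j) (p : ℕ → Fin n) (k : ℕ) :
    pathWeight D p k ≤ mtPow D k (p 0) (p k) := by
  induction k with
  | zero => simp [pathWeight_zero, mtPow_zero_apply]
  | succ k ih =>
    rw [pathWeight_succ]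
    exact (mul_le_mul_of_nonneg_right ih (hD _ _)).trans (le_mtMul _ _ _ _ _)

lemma exists_mtPow_le_pathWeight (hD : ∀ i j, 0 ≤ D i j) {k : ℕ} (hk : 0 < k) (i j : Fin n) :
    ∃ p : ℕ → Fin n, p 0 = i ∧ p k = j ∧ mtPow D k i j ≤ pathWeight D p k := by
  induction k, hk using Nat.le_induction generalizing j with
  | base =>
    refine ⟨fun t => if t = 0 then i else j, rfl, rfl, ?_⟩
    simp [pathWeight, mtPow_one_apply hD]
  | succ k hk ih =>
    have : Nonempty (Fin n) := ⟨i⟩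
    obtain ⟨l, hl⟩ := Finite.exists_max fun l => mtPow D k i l * D l j
    obtain ⟨p, hp0, hpk, hle⟩ := ih l
    refine ⟨Function.update p (k + 1) j, by simp [hp0], by simp, ?_⟩
    have hpre : pathWeight D (Function.update p (k + 1) j) k = pathWeight D p k :=
      prod_congr rfl fun t ht => by
        rw [mem_range] at ht
        rw [Function.update_of_ne (by omega), Function.update_of_ne (by omega)]
    rw [pathWeight_succ, hpre, Function.update_self, Function.update_of_ne (by omega), hpk]
    exact (mtMul_le hl).trans (mul_le_mul_of_nonneg_right hle (hD l j))

lemma apply_succ_mod_of_closed {p : ℕ → Fin n} {k t : ℕ} (hp : p k = p 0) (ht : t < k) :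
    p ((t + 1) % k) = p (t + 1) := by
  rcases (show t + 1 ≤ k from ht).lt_or_eq with h | h
  · rw [Nat.mod_eq_of_lt h]
  · rw [h, Nat.mod_self, hp]

lemma pathWeight_mod_of_closed (D : Matrix (Fin n) (Fin n) ℝ) {p : ℕ → Fin n} {k : ℕ}
    (hp : p k = p 0) : pathWeight D (fun t => p (t % k)) k = pathWeight D p k :=
  prod_congr rfl fun t ht => by
    rw [mem_range] at ht
    simp only [Nat.mod_eq_of_lt ht, apply_succ_mod_of_closed hp ht]

lemma pathWeight_rotate (D : Matrix (Fin n) (Fin n) ℝ) {p : ℕ → Fin n} {k s : ℕ}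
    (hp : p k = p 0) (hs : s < k) :
    pathWeight D (fun t => p ((s + t) % k)) k = pathWeight D p k := by
  set g : ℕ → ℝ := fun t => D (p t) (p (t + 1))
  have hk : NeZero k := ⟨by omega⟩
  have hterm : ∀ t, D (p ((s + t) % k)) (p ((s + (t + 1)) % k)) = g ((s + t) % k) := fun t => by
    rw [show (s + (t + 1)) % k = ((s + t) % k + 1) % k by rw [Nat.mod_add_mod, add_assoc],
      apply_succ_mod_of_closed hp (Nat.mod_lt _ hk.pos)]
  simp only [pathWeight, hterm]
  rw [← Fin.prod_univ_eq_prod_range (fun t => g ((s + t) % k)), ← Fin.prod_univ_eq_prod_range g]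
  exact Fintype.prod_equiv (Equiv.addLeft (⟨s, hs⟩ : Fin k)) _ _ fun t => by simp [Fin.val_add]

lemma exists_lt_le_apply_eq (p : ℕ → Fin n) : ∃ a b, a < b ∧ b ≤ n ∧ p a = p b := by
  obtain ⟨a, ha, b, hb, hab, h⟩ := exists_ne_map_eq_of_card_lt_of_maps_to
    (s := range (n + 1)) (t := univ) (by simp) (f := p) fun _ _ => mem_coe.2 (mem_univ _)
  rw [mem_range] at ha hb
  rcases hab.lt_or_gt with h' | h'
  · exact ⟨a, b, h', by omega, h⟩
  · exact ⟨b, a, h', by omega, h.symm⟩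

lemma pathWeight_le_of_cycle (hD : ∀ i j, 0 ≤ D i j) {p : ℕ → Fin n} {a d m : ℕ}
    (hm : a + d ≤ m) (hp : p (a + d) = p a) (hcyc : mtPow D d (p a) (p a) ≤ 1) :
    pathWeight D p m ≤ mtPow D (m - d) (p 0) (p m) := by
  obtain ⟨e, rfl⟩ := Nat.exists_eq_add_of_le hm
  rw [pathWeight_add D p (a + d) e, pathWeight_add D p a d,
    show a + d + e - d = a + e by omega]
  have h1 := pathWeight_le_mtPow hD p a
  have h2 := pathWeight_le_mtPow hD (fun t => p (a + t)) d
  have h3 := pathWeight_le_mtPow hD (fun t => p (a + d + t)) e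
  simp only [add_zero, hp] at h2 h3
  calc pathWeight D p a * pathWeight D (fun t => p (a + t)) d *
        pathWeight D (fun t => p (a + d + t)) e
      ≤ mtPow D a (p 0) (p a) * 1 * mtPow D e (p a) (p (a + d + e)) :=
        mul_le_mul (mul_le_mul h1 (h2.trans hcyc) (pathWeight_nonneg hD _ _)
          (mtPow_nonneg hD _ _ _)) h3 (pathWeight_nonneg hD _ _)
          (mul_nonneg (mtPow_nonneg hD _ _ _) zero_le_one)
    _ ≤ mtPow D (a + e) (p 0) (p (a + d + e)) := by
        rw [mul_one]; exact mtPow_mul_mtPow_le hD a e _ _ _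

end Paths

section Chains

variable {A C : Matrix (Fin n) (Fin n) ℝ}

lemma mtChain_zero_apply (A C : Matrix (Fin n) (Fin n) ℝ) (f : Fin 0 → ℕ) (i j : Fin n) :
    mtChain A C 0 f i j = if i = j then 1 else 0 := rfl

lemma mtChain_succ (A C : Matrix (Fin n) (Fin n) ℝ) (k : ℕ) (f : Fin (k + 1) → ℕ) :
    mtChain A C (k + 1) f = mtMul (mtMul A (mtPow C (f 0))) (mtChain A C k (Fin.tail f)) := rfl

lemma mtChain_nonneg (hA : ∀ i j, 0 ≤ A i j) (hC : ∀ i j, 0 ≤ C i j) (k : ℕ) (f : Fin k → ℕ)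
    (i j : Fin n) : 0 ≤ mtChain A C k f i j := by
  induction k generalizing i j with
  | zero => rw [mtChain_zero_apply]; split_ifs <;> norm_num
  | succ k ih =>
    exact mtMul_nonneg (mtMul_nonneg hA (mtPow_nonneg hC _)) (fun _ _ => ih _ _ _) i j

lemma mtChain_mul_le (hA : ∀ i j, 0 ≤ A i j) (hC : ∀ i j, 0 ≤ C i j) {x : Fin n → ℝ}
    (hx : ∀ i, 0 ≤ x i) {a c : ℝ} (ha : 0 ≤ a) (hc : 0 ≤ c)
    (hAx : ∀ i j, A i j * x j ≤ a * x i) (hCx : ∀ i j, C i j * x j ≤ c * x i)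
    (k : ℕ) (f : Fin k → ℕ) (i j : Fin n) :
    mtChain A C k f i j * x j ≤ a ^ k * c ^ (∑ t, f t) * x i := by
  induction k generalizing i j with
  | zero =>
    rw [mtChain_zero_apply]
    split_ifs with h
    · simp [h]
    · simpa using hx i
  | succ k ih =>
    have h := mtMul_mul_le (mtMul_nonneg hA (mtPow_nonneg hC _)) hx (by positivity)
      (mtMul_mul_le hA hx (pow_nonneg hc _) hAx (mtPow_mul_le hC hx hc hCx (f 0)))
      (ih (Fin.tail f)) i j
    rw [mtChain_succ]
    convert h using 2
    rw [Fin.sum_univ_succ, pow_succ', pow_add]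
    simp only [Fin.tail]
    ring

lemma mtChain_smul {c : ℝ} (hc : 0 ≤ c) (A C : Matrix (Fin n) (Fin n) ℝ) (k : ℕ)
    (f : Fin k → ℕ) : mtChain (c • A) C k f = c ^ k • mtChain A C k f := by
  induction k with
  | zero => rw [pow_zero, one_smul]; rfl
  | succ k ih =>
    rw [mtChain_succ, mtChain_succ, ih, smul_mtMul hc, smul_mtMul hc, mtMul_smul (pow_nonneg hc k),
      smul_smul, pow_succ']

lemma mul_mtPow_mul_mtChain_le (hA : ∀ i j, 0 ≤ A i j) (hC : ∀ i j, 0 ≤ C i j) {j : ℕ}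
    (a : ℕ) (f : Fin j → ℕ) (i l m r : Fin n) :
    A i l * mtPow C a l m * mtChain A C j f m r ≤ mtChain A C (j + 1) (Fin.cons a f) i r := by
  rw [mtChain_succ, Fin.cons_zero, Fin.tail_cons]
  exact (mul_le_mul_of_nonneg_right (le_mtMul A (mtPow C a) i l m)
    (mtChain_nonneg hA hC j f m r)).trans (le_mtMul _ _ i m r)

end Chains

section CycleMeans

variable {A C : Matrix (Fin n) (Fin n) ℝ}

lemma rpow_inv_natCast_le_iff {x y : ℝ} {k : ℕ} (hx : 0 ≤ x) (hy : 0 ≤ y) (hk : 0 < k) :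
    x ^ (k : ℝ)⁻¹ ≤ y ↔ x ≤ y ^ k := by
  rw [Real.rpow_inv_le_iff_of_pos hx hy (by exact_mod_cast hk), Real.rpow_natCast]

lemma exists_one_le_entry_bound (A : Matrix (Fin n) (Fin n) ℝ) :
    ∃ M, 1 ≤ M ∧ ∀ i j, A i j ≤ M := by
  obtain ⟨M, hM⟩ := Finite.exists_le fun p : Fin n × Fin n => A p.1 p.2
  exact ⟨max 1 M, le_max_left _ _, fun i j => (hM (i, j)).trans (le_max_right _ _)⟩

-- By definition `mtSpecRad A = sSup (mtCycleMeans A)` and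
-- `mtTheta A C = max (mtSpecRad A) (sSup (mtChainMeans A C))`.
def mtCycleMeans (A : Matrix (Fin n) (Fin n) ℝ) : Set ℝ :=
  { r : ℝ | ∃ (k : ℕ) (hk : 0 < k), k ≤ n ∧ ∃ f : Fin k → Fin n,
    r = (∏ t : Fin k, A (f t) (f ⟨((t : ℕ) + 1) % k, Nat.mod_lt _ hk⟩)) ^ ((k : ℝ)⁻¹) }

def mtChainMeans (A C : Matrix (Fin n) (Fin n) ℝ) : Set ℝ :=
  { r : ℝ | ∃ k : ℕ, 0 < k ∧ k ≤ n - 1 ∧ ∃ f : Fin k → ℕ,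
      1 ≤ ∑ t, f t ∧ (∑ t, f t) ≤ n - k ∧
      r = (⨆ i, mtChain A C k f i i) ^ ((k : ℝ)⁻¹) }

lemma mtTheta_le_iff {s : ℝ} :
    mtTheta A C ≤ s ↔ mtSpecRad A ≤ s ∧ sSup (mtChainMeans A C) ≤ s :=
  max_le_iff

lemma prod_cycle_eq_pathWeight (A : Matrix (Fin n) (Fin n) ℝ) {k : ℕ} (hk : 0 < k)
    (f : Fin k → Fin n) :
    ∏ t : Fin k, A (f t) (f ⟨((t : ℕ) + 1) % k, Nat.mod_lt _ hk⟩) =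
      pathWeight A (fun t => f ⟨t % k, Nat.mod_lt _ hk⟩) k := by
  rw [pathWeight, ← Fin.prod_univ_eq_prod_range]
  refine Fintype.prod_congr _ _ fun t => ?_
  simp only [Nat.mod_eq_of_lt t.isLt]

lemma le_of_mem_mtCycleMeans (hA : ∀ i j, 0 ≤ A i j) {s : ℝ} (hs : 0 ≤ s)
    (h : ∀ k, 0 < k → k ≤ n → ∀ i, mtPow A k i i ≤ s ^ k) {r : ℝ} (hr : r ∈ mtCycleMeans A) :
    r ≤ s := by
  obtain ⟨k, hk, hkn, f, rfl⟩ := hr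
  rw [prod_cycle_eq_pathWeight A hk, rpow_inv_natCast_le_iff (pathWeight_nonneg hA _ _) hs hk]
  refine (pathWeight_le_mtPow hA _ k).trans ?_
  simpa only [Nat.zero_mod, Nat.mod_self] using h k hk hkn (f ⟨0, hk⟩)

lemma bddAbove_mtCycleMeans (hA : ∀ i j, 0 ≤ A i j) : BddAbove (mtCycleMeans A) := by
  obtain ⟨M, hM1, hM⟩ := exists_one_le_entry_bound A
  refine ⟨M, fun r hr => le_of_mem_mtCycleMeans hA (by positivity) (fun k _ _ i => ?_) hr⟩
  simpa using mtPow_mul_le hA (x := 1) (fun _ => zero_le_one) (by positivity)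
    (by simpa using hM) k i i

lemma mtSpecRad_le_iff (hA : ∀ i j, 0 ≤ A i j) {s : ℝ} (hs : 0 ≤ s) :
    mtSpecRad A ≤ s ↔ ∀ k, 0 < k → k ≤ n → ∀ i, mtPow A k i i ≤ s ^ k := by
  refine ⟨fun h k hk hkn i => ?_,
    fun h => Real.sSup_le (fun r hr => le_of_mem_mtCycleMeans hA hs h hr) hs⟩
  obtain ⟨p, hp0, hpk, hle⟩ := exists_mtPow_le_pathWeight hA hk i i
  have hmem : pathWeight A p k ^ (k : ℝ)⁻¹ ∈ mtCycleMeans A :=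
    ⟨k, hk, hkn, fun t => p t, by
      rw [prod_cycle_eq_pathWeight A hk, pathWeight_mod_of_closed A (hpk.trans hp0.symm)]⟩
  have h' := (le_csSup (bddAbove_mtCycleMeans hA) hmem).trans h
  rw [rpow_inv_natCast_le_iff (pathWeight_nonneg hA p k) hs hk] at h'
  exact hle.trans h'

lemma le_of_mem_mtChainMeans (hA : ∀ i j, 0 ≤ A i j) (hC : ∀ i j, 0 ≤ C i j) {s : ℝ}
    (hs : 0 ≤ s) (h : ∀ k, 0 < k → k ≤ n - 1 → ∀ f : Fin k → ℕ, 1 ≤ ∑ t, f t →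
      ∑ t, f t ≤ n - k → ∀ i, mtChain A C k f i i ≤ s ^ k)
    {r : ℝ} (hr : r ∈ mtChainMeans A C) : r ≤ s := by
  obtain ⟨k, hk, hkn, f, hf1, hfn, rfl⟩ := hr
  rw [rpow_inv_natCast_le_iff (Real.iSup_nonneg fun i => mtChain_nonneg hA hC k f i i) hs hk]
  exact Real.iSup_le (h k hk hkn f hf1 hfn) (pow_nonneg hs k)

lemma bddAbove_mtChainMeans (hA : ∀ i j, 0 ≤ A i j) (hC : ∀ i j, 0 ≤ C i j) :
    BddAbove (mtChainMeans A C) := by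
  obtain ⟨a, ha1, ha⟩ := exists_one_le_entry_bound A
  obtain ⟨c, hc1, hc⟩ := exists_one_le_entry_bound C
  refine ⟨a * c ^ n, fun r hr =>
    le_of_mem_mtChainMeans hA hC (by positivity) (fun k hk _ f _ hfn i => ?_) hr⟩
  have h := mtChain_mul_le hA hC (x := 1) (a := a) (c := c) (fun _ => zero_le_one)
    (by positivity) (by positivity) (by simpa using ha) (by simpa using hc) k f i i
  simp only [Pi.one_apply, mul_one] at h
  calc mtChain A C k f i i ≤ a ^ k * c ^ (∑ t, f t) := h
    _ ≤ a ^ k * (c ^ n) ^ k := by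
        gcongr
        exact (pow_le_pow_right₀ hc1 (by omega)).trans (le_self_pow₀ (one_le_pow₀ hc1) hk.ne')
    _ = (a * c ^ n) ^ k := (mul_pow _ _ _).symm

lemma sSup_mtChainMeans_le_iff (hA : ∀ i j, 0 ≤ A i j) (hC : ∀ i j, 0 ≤ C i j) {s : ℝ}
    (hs : 0 ≤ s) : sSup (mtChainMeans A C) ≤ s ↔ ∀ k, 0 < k → k ≤ n - 1 → ∀ f : Fin k → ℕ,
      1 ≤ ∑ t, f t → ∑ t, f t ≤ n - k → ∀ i, mtChain A C k f i i ≤ s ^ k := by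
  refine ⟨fun h k hk hkn f hf1 hfn i => ?_,
    fun h => Real.sSup_le (fun r hr => le_of_mem_mtChainMeans hA hC hs h hr) hs⟩
  have hmem : (⨆ i, mtChain A C k f i i) ^ (k : ℝ)⁻¹ ∈ mtChainMeans A C :=
    ⟨k, hk, hkn, f, hf1, hfn, rfl⟩
  have h' := (le_csSup (bddAbove_mtChainMeans hA hC) hmem).trans h
  rw [rpow_inv_natCast_le_iff (Real.iSup_nonneg fun i => mtChain_nonneg hA hC k f i i) hs hk] at h'
  exact (Finite.le_ciSup (fun i => mtChain A C k f i i) i).trans h'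

lemma mtTheta_le_of_mul_le (hA : ∀ i j, 0 ≤ A i j) (hC : ∀ i j, 0 ≤ C i j) {x : Fin n → ℝ}
    (hx : ∀ i, 0 < x i) {s : ℝ} (hs : 0 ≤ s) (hAx : ∀ i j, A i j * x j ≤ s * x i)
    (hCx : ∀ i j, C i j * x j ≤ x i) : mtTheta A C ≤ s := by
  have hx0 : ∀ i, 0 ≤ x i := fun i => (hx i).le
  refine mtTheta_le_iff.2 ⟨(mtSpecRad_le_iff hA hs).2 fun k _ _ i => ?_,
    (sSup_mtChainMeans_le_iff hA hC hs).2 fun k _ _ f _ _ i => ?_⟩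
  · exact le_of_mul_le_mul_right (mtPow_mul_le hA hx0 hs hAx k i i) (hx i)
  · have h := mtChain_mul_le hA hC hx0 hs zero_le_one hAx (by simpa using hCx) k f i i
    rw [one_pow, mul_one] at h
    exact le_of_mul_le_mul_right h (hx i)

lemma mtTheta_smul_le (hA : ∀ i j, 0 ≤ A i j) (hC : ∀ i j, 0 ≤ C i j) {c s : ℝ} (hc : 0 ≤ c)
    (hs : 0 ≤ s) (h : mtTheta A C ≤ s) : mtTheta (c • A) C ≤ c * s := by
  have hcA : ∀ i j, 0 ≤ (c • A) i j := fun i j => mul_nonneg hc (hA i j)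
  rw [mtTheta_le_iff, mtSpecRad_le_iff hA hs, sSup_mtChainMeans_le_iff hA hC hs] at h
  rw [mtTheta_le_iff, mtSpecRad_le_iff hcA (mul_nonneg hc hs),
    sSup_mtChainMeans_le_iff hcA hC (mul_nonneg hc hs)]
  refine ⟨fun k hk hkn i => ?_, fun k hk hkn f hf1 hfn i => ?_⟩
  · rw [mtPow_smul hc, Matrix.smul_apply, smul_eq_mul, mul_pow]
    exact mul_le_mul_of_nonneg_left (h.1 k hk hkn i) (pow_nonneg hc k)
  · rw [mtChain_smul hc, Matrix.smul_apply, smul_eq_mul, mul_pow]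
    exact mul_le_mul_of_nonneg_left (h.2 k hk hkn f hf1 hfn i) (pow_nonneg hc k)

end CycleMeans

section Cycles

variable {A C D : Matrix (Fin n) (Fin n) ℝ}

/-- A path whose edges are labelled `A` (`true`) or `C` (`false`) is a run of `a` `C`-edges
followed by an alternating product `A ⊗ C^{⊗ f 0} ⊗ ⋯ ⊗ A ⊗ C^{⊗ f (j-1)}`. -/
lemma exists_pathWeight_le_mtChain (hA : ∀ i j, 0 ≤ A i j) (hC : ∀ i j, 0 ≤ C i j)
    (q : ℕ → Fin n) (c : ℕ → Bool) (k : ℕ) :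
    ∃ (a j : ℕ) (f : Fin j → ℕ), a + j + ∑ t, f t = k ∧
      (a + ∑ t, f t = 0 → ∀ t < k, c t = true) ∧ (c 0 = true → a = 0) ∧
      ∏ t ∈ range k, (if c t then A else C) (q t) (q (t + 1)) ≤
        pathWeight C q a * mtChain A C j f (q a) (q k) := by
  induction k generalizing q c with
  | zero =>
    refine ⟨0, 0, Fin.elim0, by simp, by simp, fun _ => rfl, ?_⟩
    simp [pathWeight_zero, mtChain_zero_apply]
  | succ k ih =>
    obtain ⟨a, j, f, hsum, hall, -, hle⟩ := ih (fun t => q (t + 1)) (fun t => c (t + 1))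
    rw [prod_range_succ']
    cases hc0 : c 0
    · refine ⟨a + 1, j, f, by omega, by omega, by simp, ?_⟩
      rw [if_neg (by simp), pathWeight_succ']
      calc (∏ t ∈ range k, (if c (t + 1) then A else C) (q (t + 1)) (q (t + 1 + 1))) *
            C (q 0) (q 1)
          ≤ pathWeight C (fun t => q (t + 1)) a * mtChain A C j f (q (a + 1)) (q (k + 1)) *
            C (q 0) (q 1) := mul_le_mul_of_nonneg_right hle (hC _ _)
        _ = _ := by ring
    · refine ⟨0, j + 1, Fin.cons a f, by simp [Fin.sum_cons]; omega, fun h t ht => ?_,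
        fun _ => rfl, ?_⟩
      · rw [Fin.sum_cons] at h
        rcases t with _ | t
        · exact hc0
        · exact hall (by omega) t (by omega)
      rw [if_pos rfl, pathWeight_zero, one_mul]
      calc (∏ t ∈ range k, (if c (t + 1) then A else C) (q (t + 1)) (q (t + 1 + 1))) *
            A (q 0) (q 1)
          ≤ A (q 0) (q 1) * mtPow C a (q 1) (q (a + 1)) *
            mtChain A C j f (q (a + 1)) (q (k + 1)) := by
            rw [mul_comm, mul_assoc]
            refine mul_le_mul_of_nonneg_left (hle.trans ?_) (hA _ _)
            exact mul_le_mul_of_nonneg_right (pathWeight_le_mtPow hC _ a)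
              (mtChain_nonneg hA hC _ _ _ _)
        _ ≤ _ := mul_mtPow_mul_mtChain_le hA hC a f _ _ _ _

lemma pathWeight_le_one_of_closed (hA : ∀ i j, 0 ≤ A i j) (hC : ∀ i j, 0 ≤ C i j)
    (hD : ∀ i j, D i j = max (A i j) (C i j))
    (hA1 : ∀ k, 0 < k → k ≤ n → ∀ i, mtPow A k i i ≤ 1)
    (hAC1 : ∀ k, 0 < k → k ≤ n - 1 → ∀ f : Fin k → ℕ, 1 ≤ ∑ t, f t → ∑ t, f t ≤ n - k →
      ∀ i, mtChain A C k f i i ≤ 1)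
    {q : ℕ → Fin n} {k : ℕ} (hk : 0 < k) (hkn : k ≤ n) (hq : q k = q 0)
    (hq0 : C (q 0) (q 1) ≤ A (q 0) (q 1)) : pathWeight D q k ≤ 1 := by
  set c : ℕ → Bool := fun t => decide (C (q t) (q (t + 1)) ≤ A (q t) (q (t + 1)))
  have hDc : pathWeight D q k = ∏ t ∈ range k, (if c t then A else C) (q t) (q (t + 1)) :=
    prod_congr rfl fun t _ => by
      by_cases h : C (q t) (q (t + 1)) ≤ A (q t) (q (t + 1))
      · simp [c, h, hD]
      · simp [c, h, hD, (not_le.1 h).le]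
  obtain ⟨a, j, f, hsum, hall, ha, hle⟩ := exists_pathWeight_le_mtChain hA hC q c k
  obtain rfl : a = 0 := ha (by simpa [c] using hq0)
  rw [hDc]
  rcases Nat.eq_zero_or_pos (∑ t, f t) with hf | hf
  · have hDA : ∏ t ∈ range k, (if c t then A else C) (q t) (q (t + 1)) = pathWeight A q k :=
      prod_congr rfl fun t ht => by rw [hall (by omega) t (mem_range.1 ht), if_pos rfl]
    rw [hDA]
    exact (pathWeight_le_mtPow hA q k).trans (hq ▸ hA1 k hk hkn (q 0))
  · have hj : 0 < j := Nat.pos_of_ne_zero fun hj => by subst hj; simp at hf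
    refine hle.trans ?_
    rw [pathWeight_zero, one_mul, hq]
    exact hAC1 j hj (by omega) f hf (by omega) (q 0)

theorem mtSpecRad_le_one_of_eq_max (hA : ∀ i j, 0 ≤ A i j) (hC : ∀ i j, 0 ≤ C i j)
    (hD : ∀ i j, D i j = max (A i j) (C i j)) (hAC : mtTheta A C ≤ 1) (hC1 : mtSpecRad C ≤ 1) :
    mtSpecRad D ≤ 1 := by
  have hD0 : ∀ i j, 0 ≤ D i j := fun i j => (hC i j).trans (hD i j ▸ le_max_right _ _)
  rw [mtTheta_le_iff, mtSpecRad_le_iff hA zero_le_one,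
    sSup_mtChainMeans_le_iff hA hC zero_le_one] at hAC
  rw [mtSpecRad_le_iff hC zero_le_one] at hC1
  simp only [one_pow] at hAC hC1
  rw [mtSpecRad_le_iff hD0 zero_le_one]
  intro k hk hkn i
  obtain ⟨p, hp0, hpk, hle⟩ := exists_mtPow_le_pathWeight hD0 hk i i
  have hp : p k = p 0 := hpk.trans hp0.symm
  rw [one_pow]
  refine hle.trans ?_
  by_cases hAedge : ∃ s < k, C (p s) (p (s + 1)) ≤ A (p s) (p (s + 1))
  · obtain ⟨s, hs, hCA⟩ := hAedge
    rw [← pathWeight_rotate D hp hs]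
    refine pathWeight_le_one_of_closed hA hC hD hAC.1 hAC.2 hk hkn ?_ ?_
    · simp
    · simpa [Nat.mod_eq_of_lt hs, apply_succ_mod_of_closed hp hs] using hCA
  · push Not at hAedge
    have hDC : pathWeight D p k = pathWeight C p k :=
      prod_congr rfl fun t ht => by rw [hD, max_eq_right (hAedge t (mem_range.1 ht)).le]
    rw [hDC]
    exact (pathWeight_le_mtPow hC p k).trans (hp ▸ hC1 k hk hkn (p 0))

lemma mtPow_le_mtStar_of_mtSpecRad_le_one (hD : ∀ i j, 0 ≤ D i j) (h : mtSpecRad D ≤ 1)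
    (m : ℕ) (i j : Fin n) : mtPow D m i j ≤ mtStar D i j := by
  rw [mtSpecRad_le_iff hD zero_le_one] at h
  induction m using Nat.strong_induction_on generalizing i j with
  | _ m ih =>
  rcases lt_or_ge m n with hm | hm
  · exact mtPow_le_mtStar D hm i j
  obtain ⟨p, rfl, rfl, hle⟩ := exists_mtPow_le_pathWeight hD (i.pos.trans_le hm) i j
  obtain ⟨a, b, hab, hbn, hpab⟩ := exists_lt_le_apply_eq p
  have hcyc : mtPow D (b - a) (p a) (p a) ≤ 1 := by
    simpa using h (b - a) (by omega) (by omega) (p a)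
  have hpa : p (a + (b - a)) = p a := by rw [Nat.add_sub_cancel' hab.le, hpab]
  exact hle.trans <| (pathWeight_le_of_cycle hD (by omega) hpa hcyc).trans (ih _ (by omega) _ _)

end Cycles

theorem mt_constrained_minimizers_general {n : ℕ} (A C : Matrix (Fin n) (Fin n) ℝ)
    (hA : ∀ i j, 0 ≤ A i j) (hC : ∀ i j, 0 ≤ C i j)
    (hlam : 0 < mtSpecRad A)
    (hTr : ∀ k : ℕ, 1 ≤ k → k ≤ n → ∀ i, mtPow C k i i ≤ 1)
    (θ : ℝ) (hθ : θ = mtTheta A C)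
    (D : Matrix (Fin n) (Fin n) ℝ) (hD : ∀ i j, D i j = max (θ⁻¹ * A i j) (C i j))
    (x : Fin n → ℝ) (hx : ∀ i, 0 < x i) :
    ((∀ i, (⨆ j, C i j * x j) ≤ x i) ∧
        (⨆ p : Fin n × Fin n, A p.1 p.2 * x p.2 / x p.1) = θ) ↔
      ∃ u : Fin n → ℝ, (∀ i, 0 < u i) ∧ x = mtVecMul (mtStar D) u := by
  have hθ0 : 0 < θ := hθ ▸ hlam.trans_le (le_max_left _ _)
  have hD0 : ∀ i j, 0 ≤ D i j := fun i j => (hC i j).trans (hD i j ▸ le_max_right _ _)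
  have hDx_iff : (∀ i j, D i j * x j ≤ x i) ↔
      (∀ i j, C i j * x j ≤ x i) ∧ ∀ i j, A i j * x j ≤ θ * x i := by
    simp only [hD, max_mul_of_nonneg _ _ (hx _).le, max_le_iff, mul_assoc,
      inv_mul_le_iff₀ hθ0, forall_and]
    exact and_comm
  have hCx_iff : (∀ i, (⨆ j, C i j * x j) ≤ x i) ↔ ∀ i j, C i j * x j ≤ x i :=
    ⟨fun h i j => (Finite.le_ciSup (fun j => C i j * x j) j).trans (h i),
      fun h i => Real.iSup_le (h i) (hx i).le⟩
  have hAs : ∀ i j, A i j * x j ≤ (⨆ p : Fin n × Fin n, A p.1 p.2 * x p.2 / x p.1) * x i :=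
    fun i j => (div_le_iff₀ (hx i)).1
      (Finite.le_ciSup (fun p : Fin n × Fin n => A p.1 p.2 * x p.2 / x p.1) (i, j))
  constructor
  · rintro ⟨hCx, hs⟩
    refine ⟨x, hx, (mtVecMul_mtStar_eq_self hD0 (fun i => (hx i).le) ?_).symm⟩
    exact hDx_iff.2 ⟨hCx_iff.1 hCx, hs ▸ hAs⟩
  · rintro ⟨u, hu, hxu⟩
    have hA' : ∀ i j, 0 ≤ (θ⁻¹ • A) i j := fun i j => mul_nonneg (inv_nonneg.2 hθ0.le) (hA i j)
    have hDrad : mtSpecRad D ≤ 1 := by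
      refine mtSpecRad_le_one_of_eq_max hA' hC (fun i j => hD i j) ?_ ?_
      · simpa [inv_mul_cancel₀ hθ0.ne'] using
          mtTheta_smul_le hA hC (inv_nonneg.2 hθ0.le) hθ0.le hθ.ge
      · exact (mtSpecRad_le_iff hC zero_le_one).2 fun k hk hkn i => by simpa using hTr k hk hkn i
    have hDx : ∀ i j, D i j * x j ≤ x i := hxu ▸ mul_mtVecMul_mtStar_le hD0 (fun i => (hu i).le)
      (mtPow_le_mtStar_of_mtSpecRad_le_one hD0 hDrad)
    obtain ⟨hCx, hAx⟩ := hDx_iff.1 hDx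
    refine ⟨hCx_iff.2 hCx, le_antisymm ?_ ?_⟩
    · exact Real.iSup_le (fun p => (div_le_iff₀ (hx p.1)).2 (hAx p.1 p.2)) hθ0.le
    · exact hθ ▸ mtTheta_le_of_mul_le hA hC hx
        (Real.iSup_nonneg fun p => div_nonneg (mul_nonneg (hA _ _) (hx _).le) (hx _).le) hAs hCx

/-- A positive vector `x` is a minimizer of the constrained problem
(i.e. satisfies `C ⊗ x ≤ x` and attains the value `θ`) iff `x = D^* ⊗ u` for some
positive `u`, where `D_{ij} = max(θ⁻¹ A_{ij}, C_{ij})`. -/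
theorem mt_constrained_minimizers {n : ℕ} (hn : 1 ≤ n) (A C : Matrix (Fin n) (Fin n) ℝ)
    (hA : ∀ i j, 0 ≤ A i j) (hC : ∀ i j, 0 ≤ C i j)
    (hlam : 0 < mtSpecRad A)
    (hTr : ∀ k : ℕ, 1 ≤ k → k ≤ n → ∀ i, mtPow C k i i ≤ 1)
    (θ : ℝ) (hθ : θ = mtTheta A C)
    (D : Matrix (Fin n) (Fin n) ℝ) (hD : ∀ i j, D i j = max (θ⁻¹ * A i j) (C i j))
    (x : Fin n → ℝ) (hx : ∀ i, 0 < x i) :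
    ((∀ i, (⨆ j, C i j * x j) ≤ x i) ∧
        (⨆ p : Fin n × Fin n, A p.1 p.2 * x p.2 / x p.1) = θ) ↔
      ∃ u : Fin n → ℝ, (∀ i, 0 < u i) ∧ x = mtVecMul (mtStar D) u :=
  mt_constrained_minimizers_general A C hA hC hlam hTr θ hθ D hD x hx
end
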